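/- (The Dirac algebra is the complexification of the spacetime algebra.) The complexification ℂ ⊗_ℝ Cℓ(1,3) of the real spacetime algebra Cℓ(1,3) is isomorphic as a ℂ-algebra to the algebra of 4×4 complex matrices: ℂ ⊗_ℝ Cℓ(1,3) ≃ₐ[ℂ] Matrix (Fin 4) (Fin 4) ℂ. -/

import Mathlib

/-!
The Dirac matrices satisfy the Clifford relations of the Minkowski form, so they induce a map of
`ℂ`-algebras `ℂ ⊗ Cℓ(1,3) → M₄(ℂ)`. Its image contains the matrix unit `E₀₀`, the product of the
spectral projections `(1 + γ⁰)/2` and `(1 + iγ¹γ²)/2`, and multiplying `E₀₀` by suitable products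
of gamma matrices on either side gives every `E_{i0}` and `E_{0j}`, hence every `E_{ij}`. So the map
is surjective, and it is bijective because both sides have complex dimension `16 = 2⁴`: in
characteristic not two, a Clifford algebra is linearly isomorphic to the exterior algebra.
-/

open scoped TensorProduct

noncomputable def Q13 : QuadraticForm ℝ (Fin 4 → ℝ) :=
  QuadraticMap.weightedSumSquares ℝ ![(1 : ℝ), -1, -1, -1]

open Module

theorem Fintype.linearCombination_mul_self_eq_weightedSumSquares {R A I : Type*} [CommRing R]
    [Ring A] [Algebra R A] [Fintype I] {w : I → R} {γ : I → A}
    (hsq : ∀ i, γ i * γ i = algebraMap R A (w i))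
    (hanti : Pairwise fun i j => γ i * γ j = -(γ j * γ i)) (v : I → R) :
    Fintype.linearCombination R γ v * Fintype.linearCombination R γ v =
      algebraMap R A (QuadraticMap.weightedSumSquares R w v) := by
  classical
  simp only [Fintype.linearCombination_apply, QuadraticMap.weightedSumSquares_apply, smul_eq_mul]
  induction (Finset.univ : Finset I) using Finset.induction_on with
  | empty => simp
  | insert a s ha ih =>
    have hcross : v a • γ a * ∑ i ∈ s, v i • γ i + (∑ i ∈ s, v i • γ i) * v a • γ a = 0 := by
      rw [Finset.mul_sum, Finset.sum_mul, ← Finset.sum_add_distrib]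
      refine Finset.sum_eq_zero fun i hi => ?_
      rw [smul_mul_smul_comm, smul_mul_smul_comm, hanti (ne_of_mem_of_not_mem hi ha).symm,
        mul_comm (v i), smul_neg, neg_add_cancel]
    rw [Finset.sum_insert ha, Finset.sum_insert ha, map_add, ← ih, add_mul, mul_add, mul_add,
      smul_mul_smul_comm, hsq, Algebra.smul_def, ← map_mul, mul_comm (v a * v a), add_assoc,
      ← add_assoc (v a • γ a * _), hcross, zero_add]

namespace CliffordAlgebra

section Dimension

variable {K V : Type*} [Field K] [Invertible (2 : K)] [AddCommGroup V] [Module K V]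
  [FiniteDimensional K V] (Q : QuadraticForm K V)

noncomputable def basisFinset : Basis (Finset (Fin (finrank K V))) K (CliffordAlgebra Q) :=
  (finBasis K V).ExteriorAlgebra.map (equivExterior Q).symm

instance : FiniteDimensional K (CliffordAlgebra Q) := .of_basis (basisFinset Q)

theorem finrank_eq_two_pow : finrank K (CliffordAlgebra Q) = 2 ^ finrank K V := by
  rw [finrank_eq_card_basis (basisFinset Q), Fintype.card_finset, Fintype.card_fin]

end Dimension

section WeightedSumSquares

variable {R A I : Type*} [CommRing R] [Ring A] [Algebra R A] [Fintype I] {w : I → R} {γ : I → A}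
  (hsq : ∀ i, γ i * γ i = algebraMap R A (w i))
  (hanti : Pairwise fun i j => γ i * γ j = -(γ j * γ i))

noncomputable def liftOfAnticommute :
    CliffordAlgebra (QuadraticMap.weightedSumSquares R w) →ₐ[R] A :=
  lift _ ⟨Fintype.linearCombination R γ,
    Fintype.linearCombination_mul_self_eq_weightedSumSquares hsq hanti⟩

theorem liftOfAnticommute_ι_single [DecidableEq I] (i : I) :
    liftOfAnticommute hsq hanti (ι _ (Pi.single i 1)) = γ i := by
  simp [liftOfAnticommute]

end WeightedSumSquares

end CliffordAlgebra

namespace Matrix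

theorem subalgebra_eq_top_of_single_mem {R n : Type*} [CommSemiring R] [Fintype n] [DecidableEq n]
    {S : Subalgebra R (Matrix n n R)} (k : n) (hcol : ∀ i, single i k 1 ∈ S)
    (hrow : ∀ j, single k j 1 ∈ S) : S = ⊤ := by
  refine eq_top_iff.2 fun M _ => ?_
  rw [matrix_eq_sum_single M]
  refine Subalgebra.sum_mem _ fun i _ => Subalgebra.sum_mem _ fun j _ => ?_
  have : single i j (M i j) = M i j • (single i k 1 * single k j 1) := by
    rw [single_mul_single_same, mul_one, smul_single, smul_eq_mul, mul_one]
  rw [this]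
  exact Subalgebra.smul_mem _ (Subalgebra.mul_mem _ (hcol i) (hrow j)) _

end Matrix

section Dirac

open Complex Matrix CliffordAlgebra

-- The Dirac representation: `γ⁰ = diag(1, 1, -1, -1)` and `γᵏ = [[0, σₖ], [-σₖ, 0]]`.
noncomputable def diracGamma : Fin 4 → Matrix (Fin 4) (Fin 4) ℂ :=
  ![!![1, 0, 0, 0; 0, 1, 0, 0; 0, 0, -1, 0; 0, 0, 0, -1],
    !![0, 0, 0, 1; 0, 0, 1, 0; 0, -1, 0, 0; -1, 0, 0, 0],
    !![0, 0, 0, -I; 0, 0, I, 0; 0, I, 0, 0; -I, 0, 0, 0],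
    !![0, 0, 1, 0; 0, 0, 0, -1; -1, 0, 0, 0; 0, 1, 0, 0]]

local notation "γ" => diracGamma

theorem diracGamma_mul_self (μ : Fin 4) :
    γ μ * γ μ = algebraMap ℝ _ (![1, -1, -1, -1] μ) := by
  fin_cases μ <;> simp [diracGamma, ← Matrix.ext_iff, Fin.forall_fin_succ]

theorem diracGamma_anticommute : Pairwise fun μ ν => γ μ * γ ν = -(γ ν * γ μ) := by
  intro μ ν h
  fin_cases μ <;> fin_cases ν <;> simp_all [diracGamma]

theorem single_zero_zero_eq_diracGamma :
    single 0 0 1 = ((2⁻¹ : ℂ) • (1 + γ 0)) * ((2⁻¹ : ℂ) • (1 + I • (γ 1 * γ 2))) := by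
  ext a b
  fin_cases a <;> fin_cases b <;>
    simp [diracGamma, Matrix.mul_apply, Fin.sum_univ_four, Matrix.one_apply, ← two_mul]

theorem single_row_zero_eq_mul (j : Fin 4) :
    single 0 j 1 = single 0 0 (1 : ℂ) * ![1, γ 1 * γ 3, γ 3, γ 1] j := by
  fin_cases j <;> simp [diracGamma, ← Matrix.ext_iff, Fin.forall_fin_succ]

theorem single_col_zero_eq_mul (i : Fin 4) :
    single i 0 1 = ![1, γ 3 * γ 1, -γ 3, -γ 1] i * single 0 0 (1 : ℂ) := by
  fin_cases i <;> ext a b <;> fin_cases a <;> fin_cases b <;>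
    simp [diracGamma, Matrix.mul_apply, Matrix.single_apply]

theorem adjoin_diracGamma_eq_top : Algebra.adjoin ℂ (Set.range γ) = ⊤ := by
  set S := Algebra.adjoin ℂ (Set.range γ)
  have hγ (μ : Fin 4) : γ μ ∈ S := Algebra.subset_adjoin ⟨μ, rfl⟩
  have h00 : single 0 0 1 ∈ S := by
    rw [single_zero_zero_eq_diracGamma]
    exact S.mul_mem (S.smul_mem (S.add_mem S.one_mem (hγ 0)) _)
      (S.smul_mem (S.add_mem S.one_mem (S.smul_mem (S.mul_mem (hγ 1) (hγ 2)) _)) _)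
  refine subalgebra_eq_top_of_single_mem 0 (fun i => ?_) (fun j => ?_)
  · rw [single_col_zero_eq_mul]
    refine S.mul_mem ?_ h00
    fin_cases i
    exacts [S.one_mem, S.mul_mem (hγ 3) (hγ 1), S.neg_mem (hγ 3), S.neg_mem (hγ 1)]
  · rw [single_row_zero_eq_mul]
    refine S.mul_mem h00 ?_
    fin_cases j
    exacts [S.one_mem, S.mul_mem (hγ 1) (hγ 3), hγ 3, hγ 1]

noncomputable def diracRep : CliffordAlgebra Q13 →ₐ[ℝ] Matrix (Fin 4) (Fin 4) ℂ :=
  liftOfAnticommute (w := ![1, -1, -1, -1]) diracGamma_mul_self diracGamma_anticommute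

noncomputable def diracRepComplex : ℂ ⊗[ℝ] CliffordAlgebra Q13 →ₐ[ℂ] Matrix (Fin 4) (Fin 4) ℂ :=
  Algebra.TensorProduct.lift (Algebra.ofId ℂ _) diracRep fun z _ => by
    rw [Algebra.ofId_apply]
    exact Algebra.commute_algebraMap_left z _

theorem diracRepComplex_one_tmul_ι_single (μ : Fin 4) :
    diracRepComplex (1 ⊗ₜ ι Q13 (Pi.single μ 1)) = γ μ := by
  rw [diracRepComplex, Algebra.TensorProduct.lift_tmul, map_one, one_mul]
  exact liftOfAnticommute_ι_single _ _ μ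

theorem diracRepComplex_surjective : Function.Surjective diracRepComplex := by
  refine (AlgHom.range_eq_top _).1 (eq_top_iff.2 ?_)
  rw [← adjoin_diracGamma_eq_top, Algebra.adjoin_le_iff]
  rintro _ ⟨μ, rfl⟩
  exact ⟨1 ⊗ₜ ι Q13 (Pi.single μ 1), diracRepComplex_one_tmul_ι_single μ⟩

end Dirac

/-- The Dirac algebra is the complexification of the spacetime algebra. -/
theorem complexified_spacetime_algebra_iso_dirac :
    Nonempty ((ℂ ⊗[ℝ] CliffordAlgebra Q13) ≃ₐ[ℂ] Matrix (Fin 4) (Fin 4) ℂ) := by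
  have hdim : finrank ℂ (ℂ ⊗[ℝ] CliffordAlgebra Q13) = finrank ℂ (Matrix (Fin 4) (Fin 4) ℂ) := by
    rw [finrank_baseChange, CliffordAlgebra.finrank_eq_two_pow, finrank_matrix]
    simp
  have hinj := (LinearMap.injective_iff_surjective_of_finrank_eq_finrank hdim
    (f := diracRepComplex.toLinearMap)).2 diracRepComplex_surjective
  exact ⟨.ofBijective diracRepComplex ⟨hinj, diracRepComplex_surjective⟩⟩
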